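/- Conservation of the basic energy: let (u, F, d, p) be a smooth solution on ℝ³ × [0, T] of the LCE system ∂_t u + u·∇u + ∇p = ∇·(FFᵀ) − div(∇d ⊙ ∇d), ∂_t F + u·∇F = ∇u F, D_t²d − Δd = (−|D_t d|² + |∇d|²)d, with div u = 0 and |d(x,t)| = 1 pointwise, and assume u(·,t), F(·,t), D_t d(·,t), ∇d(·,t) and p(·,t) are square-integrable and decay, together with their first derivatives, sufficiently fast as |x| → ∞ that all the integrations by parts below are justified. Then the energy E(t) = (1/2)∫_{ℝ³}(|u|² + |F|² + |D_t d|² + |∇d|²) dx is constant in time: dE/dt = 0 on [0, T]. -/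

import Mathlib

noncomputable section
open MeasureTheory Real Set

abbrev V3 : Type := Fin 3 → ℝ

def e3 (i : Fin 3) : V3 := fun j => if j = i then (1:ℝ) else 0

/-- spatial partial derivative of a scalar function on `ℝ³` -/
def spd (i : Fin 3) (g : V3 → ℝ) : V3 → ℝ := fun x => fderiv ℝ g x (e3 i)

/-- Euclidean length `r = |x|` -/
def rad (x : V3) : ℝ := Real.sqrt (∑ i, (x i)^2)

/-- Japanese bracket `⟨s⟩ = (1+s²)^{1/2}` -/
def jb (s : ℝ) : ℝ := Real.sqrt (1 + s^2)

/-- Levi-Civita symbol on `Fin 3` -/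
def eps (i j k : Fin 3) : ℝ :=
  if j = i + 1 ∧ k = i + 2 then 1 else if j = i + 2 ∧ k = i + 1 then -1 else 0

abbrev SF := ℝ → V3 → ℝ
abbrev VF := ℝ → V3 → Fin 3 → ℝ
abbrev MF := ℝ → V3 → Fin 3 → Fin 3 → ℝ
abbrev PF := ℝ → V3 → Fin 2 → ℝ

def pt (f : SF) : SF := fun t x => deriv (fun s => f s x) t
def pd (i : Fin 3) (f : SF) : SF := fun t x => spd i (f t) x
def Oms (i : Fin 3) (f : SF) : SF :=
  fun t x => x (i+1) * pd (i+2) f t x - x (i+2) * pd (i+1) f t x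

def ptC {ι : Type} (f : ℝ → V3 → ι → ℝ) : ℝ → V3 → ι → ℝ :=
  fun t x k => deriv (fun s => f s x k) t
def pdC {ι : Type} (i : Fin 3) (f : ℝ → V3 → ι → ℝ) : ℝ → V3 → ι → ℝ :=
  fun t x k => spd i (fun y => f t y k) x
def OmC {ι : Type} (i : Fin 3) (f : ℝ → V3 → ι → ℝ) : ℝ → V3 → ι → ℝ :=
  fun t x k => x (i+1) * pdC (i+2) f t x k - x (i+2) * pdC (i+1) f t x k
def SC {ι : Type} (f : ℝ → V3 → ι → ℝ) : ℝ → V3 → ι → ℝ :=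
  fun t x k => t * ptC f t x k + ∑ i, x i * pdC i f t x k

def ptM (f : MF) : MF := fun t x j k => deriv (fun s => f s x j k) t
def pdM (i : Fin 3) (f : MF) : MF := fun t x j k => spd i (fun y => f t y j k) x
def OmM (i : Fin 3) (f : MF) : MF :=
  fun t x j k => x (i+1) * pdM (i+2) f t x j k - x (i+2) * pdM (i+1) f t x j k
def SM (f : MF) : MF := fun t x j k => t * ptM f t x j k + ∑ i, x i * pdM i f t x j k

/-- perturbed rotation on vector fields : `Ω̃ᵢ u = Ωᵢ u + Aᵢ u` -/
def rotU (i : Fin 3) (u : VF) : VF := fun t x k => OmC i u t x k + ∑ m, eps i k m * u t x m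
/-- perturbed rotation on matrix fields : `Ω̃ᵢ H = Ωᵢ H + [Aᵢ , H]` -/
def rotM (i : Fin 3) (f : MF) : MF :=
  fun t x j k => OmM i f t x j k + ∑ m, (eps i j m * f t x m k - f t x j m * eps i m k)

def ZuOp : Fin 8 → VF → VF := ![ptC, pdC 0, pdC 1, pdC 2, rotU 0, rotU 1, rotU 2, SC]
def ZHOp : Fin 8 → MF → MF := ![ptM, pdM 0, pdM 1, pdM 2, rotM 0, rotM 1, rotM 2, SM]
/-- vector fields acting componentwise (for the angles φ and the director d):
`Ω̃ = Ω` and `S̃ = S - 1`. -/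
def ZcOp {ι : Type} : Fin 8 → (ℝ → V3 → ι → ℝ) → (ℝ → V3 → ι → ℝ) :=
  ![ptC, pdC 0, pdC 1, pdC 2, OmC 0, OmC 1, OmC 2, fun f t x k => SC f t x k - f t x k]
/-- vector fields acting on scalars with the convention `S̃ f = S f - c f`. -/
def ZsOp (c : ℝ) : Fin 8 → SF → SF :=
  ![pt, pd 0, pd 1, pd 2, Oms 0, Oms 1, Oms 2,
    fun f t x => t * pt f t x + (∑ i, x i * pd i f t x) - c * f t x]

/-- `Z^a = Z₁^{a₁} ∘ ⋯ ∘ Z_n^{a_n}` -/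
def Lpow {n : ℕ} {α : Type} (op : Fin n → α → α) (a : Fin n → ℕ) : α → α :=
  (List.finRange n).foldr (fun i g => (op i)^[a i] ∘ g) id

abbrev MI := Fin 8 → ℕ
def deg {n : ℕ} (a : Fin n → ℕ) : ℕ := ∑ i, a i
/-- the finite set of multi-indices `a` with `|a| ≤ j` -/
def MIS {n : ℕ} (j : ℕ) : Finset (Fin n → ℕ) :=
  (Fintype.piFinset fun _ => Finset.range (j+1)).filter fun a => deg a ≤ j
/-- multi-indices `b ≤ a` -/
def below {n : ℕ} (a : Fin n → ℕ) : Finset (Fin n → ℕ) :=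
  Fintype.piFinset fun i => Finset.range (a i + 1)
def msub {n : ℕ} (a b : Fin n → ℕ) : Fin n → ℕ := fun i => a i - b i
/-- multi-binomial coefficient `C_a^b` -/
def mbin {n : ℕ} (a b : Fin n → ℕ) : ℕ := ∏ i, Nat.choose (a i) (b i)
/-- multi-trinomial coefficient `C_a^{b,c}` -/
def mtri {n : ℕ} (a b c : Fin n → ℕ) : ℕ :=
  ∏ i, (a i).factorial / ((b i).factorial * (c i).factorial * (a i - b i - c i).factorial)

def Zu (a : MI) : VF → VF := Lpow ZuOp a
def ZH (a : MI) : MF → MF := Lpow ZHOp a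
def Zc {ι : Type} (a : MI) : (ℝ → V3 → ι → ℝ) → (ℝ → V3 → ι → ℝ) := Lpow ZcOp a
def Zs (c : ℝ) (a : MI) : SF → SF := Lpow (ZsOp c) a

/-- material derivative `D_t = ∂_t + u·∇` -/
def DtC {ι : Type} (u : VF) (f : ℝ → V3 → ι → ℝ) : ℝ → V3 → ι → ℝ :=
  fun t x m => ptC f t x m + ∑ i, u t x i * pdC i f t x m

/-- the nonlinearity `R₂` -/
def R2 (u : VF) (φ : PF) : PF := fun t x m =>
  if m = 0 then
    2 * Real.tan (φ t x 1) *
      (DtC u φ t x 0 * DtC u φ t x 1 - ∑ j, pdC j φ t x 0 * pdC j φ t x 1)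
  else
    (1/2) * Real.sin (2 * φ t x 1) * (-(DtC u φ t x 0)^2 + ∑ j, (pdC j φ t x 0)^2)

/-- smooth solutions of the reformulated liquid crystal elastomer system,
the equations holding for times in the set `s`. -/
structure IsLCESol (s : Set ℝ) (u : VF) (H : MF) (φ : PF) (p : SF) : Prop where
  smooth_u : ContDiff ℝ (⊤ : ℕ∞) (fun q : ℝ × V3 => u q.1 q.2)
  smooth_H : ContDiff ℝ (⊤ : ℕ∞) (fun q : ℝ × V3 => H q.1 q.2)
  smooth_phi : ContDiff ℝ (⊤ : ℕ∞) (fun q : ℝ × V3 => φ q.1 q.2)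
  smooth_p : ContDiff ℝ (⊤ : ℕ∞) (fun q : ℝ × V3 => p q.1 q.2)
  eq_u : ∀ t ∈ s, ∀ (x : V3) (i : Fin 3),
    ptC u t x i - (∑ j, pdM j H t x i j) + pd i p t x
      = -(∑ j, u t x j * pdC j u t x i)
        + (∑ j, spd j (fun y => ∑ k, H t y i k * H t y j k) x)
        - (∑ j, spd j (fun y => ∑ m, pdC i φ t y m * pdC j φ t y m) x)
        + (∑ j, spd j (fun y => (Real.sin (φ t y 1))^2 * pdC i φ t y 0 * pdC j φ t y 0) x)
  eq_H : ∀ t ∈ s, ∀ (x : V3) (i j : Fin 3),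
    ptM H t x i j - pdC j u t x i
      = -(∑ k, u t x k * pdM k H t x i j) + (∑ k, pdC k u t x i * H t x k j)
  eq_phi : ∀ t ∈ s, ∀ (x : V3) (m : Fin 2),
    DtC u (DtC u φ) t x m - (∑ j, pdC j (pdC j φ) t x m) = R2 u φ t x m
  div_u : ∀ t ∈ s, ∀ x : V3, (∑ i, pdC i u t x i) = 0
  div_HT : ∀ t ∈ s, ∀ (x : V3) (j : Fin 3), (∑ i, pdM i H t x i j) = 0
  curl_H : ∀ t ∈ s, ∀ (x : V3) (i j k : Fin 3),
    pdM j H t x i k - pdM k H t x i j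
      = ∑ m, (H t x m k * pdM m H t x i j - H t x m j * pdM m H t x i k)

/-- the generalized energy `E_a` -/
def Ea {ι : Type} [Fintype ι] (u : VF) (H : MF) (w : ℝ → V3 → ι → ℝ) (a : MI) (t : ℝ) : ℝ :=
  (1/2) * ∫ x : V3, ((∑ k, (Zu a u t x k)^2) + (∑ i, ∑ j, (ZH a H t x i j)^2)
    + (∑ m, (DtC u (Zc a w) t x m)^2) + (∑ i, ∑ m, (pdC i (Zc a w) t x m)^2))
/-- `E_j = Σ_{|a| ≤ j} E_a` -/
def EJ {ι : Type} [Fintype ι] (u : VF) (H : MF) (w : ℝ → V3 → ι → ℝ) (j : ℕ) (t : ℝ) : ℝ :=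
  ∑ a ∈ MIS j, Ea u H w a t

/-- space-time derivatives -/
def ddC {ι : Type} : Fin 4 → (ℝ → V3 → ι → ℝ) → (ℝ → V3 → ι → ℝ) := ![ptC, pdC 0, pdC 1, pdC 2]

def gradSqC {ι : Type} [Fintype ι] (f : ℝ → V3 → ι → ℝ) (t : ℝ) (x : V3) : ℝ :=
  ∑ i, ∑ m, (pdC i f t x m)^2
def gradSqM (f : MF) (t : ℝ) (x : V3) : ℝ := ∑ i, ∑ j, ∑ k, (pdM i f t x j k)^2
/-- `|D² f|²` : all second space-time derivatives -/
def d2Sq {ι : Type} [Fintype ι] (f : ℝ → V3 → ι → ℝ) (t : ℝ) (x : V3) : ℝ :=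
  ∑ μ : Fin 4, ∑ ν : Fin 4, ∑ m, (ddC μ (ddC ν f) t x m)^2
/-- `|∇_{t,x} f|²` : all first space-time derivatives -/
def d1Sq {ι : Type} [Fintype ι] (f : ℝ → V3 → ι → ℝ) (t : ℝ) (x : V3) : ℝ :=
  ∑ μ : Fin 4, ∑ m, (ddC μ f t x m)^2

def XuHa (u : VF) (H : MF) (a : MI) (t : ℝ) : ℝ :=
  ∫ x : V3, (jb (t - rad x))^2 * (gradSqC (Zu a u) t x + gradSqM (ZH a H) t x)
def Xpa {ι : Type} [Fintype ι] (w : ℝ → V3 → ι → ℝ) (a : MI) (t : ℝ) : ℝ :=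
  ∫ x : V3, (jb (t - rad x))^2 * d2Sq (Zc a w) t x
def XHa (H : MF) (a : MI) (t : ℝ) : ℝ :=
  ∫ x : V3, (jb (t - rad x))^2 * gradSqM (ZH a H) t x
def Xa {ι : Type} [Fintype ι] (u : VF) (H : MF) (w : ℝ → V3 → ι → ℝ) (a : MI) (t : ℝ) : ℝ :=
  XuHa u H a t + Xpa w a t

def nrmC {ι : Type} [Fintype ι] (v : ι → ℝ) : ℝ := Real.sqrt (∑ k, (v k)^2)
def nrmM (m : Fin 3 → Fin 3 → ℝ) : ℝ := Real.sqrt (∑ i, ∑ j, (m i j)^2)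
/-- `ω = x/|x|` -/
def omg (x : V3) (i : Fin 3) : ℝ := x i / rad x



/-- smooth solutions of the LCE system on `ℝ³ × [0,T]` with `div u = 0` and `|d| = 1`. -/
structure IsOrigSol3 (T : ℝ) (u : VF) (F : MF) (d : VF) (p : SF) : Prop where
  smooth_u : ContDiff ℝ (⊤ : ℕ∞) (fun q : ℝ × V3 => u q.1 q.2)
  smooth_F : ContDiff ℝ (⊤ : ℕ∞) (fun q : ℝ × V3 => F q.1 q.2)
  smooth_d : ContDiff ℝ (⊤ : ℕ∞) (fun q : ℝ × V3 => d q.1 q.2)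
  smooth_p : ContDiff ℝ (⊤ : ℕ∞) (fun q : ℝ × V3 => p q.1 q.2)
  eq_u : ∀ t ∈ Set.Icc 0 T, ∀ (x : V3) (i : Fin 3),
    ptC u t x i + (∑ j, u t x j * pdC j u t x i) + pd i p t x
      = (∑ j, spd j (fun y => ∑ k, F t y i k * F t y j k) x)
        - (∑ j, spd j (fun y => ∑ k, pdC i d t y k * pdC j d t y k) x)
  eq_F : ∀ t ∈ Set.Icc 0 T, ∀ (x : V3) (i j : Fin 3),
    ptM F t x i j + (∑ k, u t x k * pdM k F t x i j) = ∑ k, pdC k u t x i * F t x k j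
  eq_d : ∀ t ∈ Set.Icc 0 T, ∀ (x : V3) (m : Fin 3),
    DtC u (DtC u d) t x m - (∑ j, pdC j (pdC j d) t x m)
      = (-(∑ k, (DtC u d t x k)^2) + ∑ i, ∑ k, (pdC i d t x k)^2) * d t x m
  div_u : ∀ t ∈ Set.Icc 0 T, ∀ x : V3, (∑ i, pdC i u t x i) = 0
  unit_d : ∀ t ∈ Set.Icc 0 T, ∀ x : V3, (∑ m, (d t x m)^2) = 1

/-- the basic energy `E(t) = ½∫ (|u|² + |F|² + |D_t d|² + |∇d|²) dx` -/
def basicE (u : VF) (F : MF) (d : VF) (t : ℝ) : ℝ :=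
  (1/2) * ∫ x : V3, ((∑ k, (u t x k)^2) + (∑ i, ∑ j, (F t x i j)^2)
    + (∑ m, (DtC u d t x m)^2) + (∑ i, ∑ m, (pdC i d t x m)^2))


namespace LCEaux

abbrev Sm (g : ℝ × V3 → ℝ) : Prop := ContDiff ℝ (⊤ : ℕ∞) g

def Dv (v : ℝ × V3) (g : ℝ × V3 → ℝ) : ℝ × V3 → ℝ := fun q => fderiv ℝ g q v

theorem Sm.dv {g : ℝ × V3 → ℝ} (hg : Sm g) (v : ℝ × V3) : Sm (Dv v g) :=
  (hg.fderiv_right (by simp)).clm_apply contDiff_const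

theorem Sm.diffAt {g : ℝ × V3 → ℝ} (hg : Sm g) (q : ℝ × V3) : DifferentiableAt ℝ g q :=
  (hg.differentiable (by simp)) q

theorem Sm.add {f g : ℝ × V3 → ℝ} (hf : Sm f) (hg : Sm g) : Sm (fun q => f q + g q) := ContDiff.add hf hg
theorem Sm.sub {f g : ℝ × V3 → ℝ} (hf : Sm f) (hg : Sm g) : Sm (fun q => f q - g q) := ContDiff.sub hf hg
theorem Sm.neg' {f : ℝ × V3 → ℝ} (hf : Sm f) : Sm (fun q => -f q) := hf.neg
theorem Sm.mul {f g : ℝ × V3 → ℝ} (hf : Sm f) (hg : Sm g) : Sm (fun q => f q * g q) := ContDiff.mul hf hg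
theorem Sm.sq {f : ℝ × V3 → ℝ} (hf : Sm f) : Sm (fun q => f q ^ 2) := hf.pow 2
theorem Sm.sum {ι : Type*} {s : Finset ι} {f : ι → ℝ × V3 → ℝ} (hf : ∀ i ∈ s, Sm (f i)) :
    Sm (fun q => ∑ i ∈ s, f i q) := ContDiff.sum hf
theorem Sm.const (c : ℝ) : Sm (fun _ => c) := contDiff_const

theorem dv_add {f g : ℝ × V3 → ℝ} (hf : Sm f) (hg : Sm g) (v q) :
    Dv v (fun q => f q + g q) q = Dv v f q + Dv v g q := by
  simp [Dv, fderiv_fun_add (hf.diffAt q) (hg.diffAt q)]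
theorem dv_sub {f g : ℝ × V3 → ℝ} (hf : Sm f) (hg : Sm g) (v q) :
    Dv v (fun q => f q - g q) q = Dv v f q - Dv v g q := by
  simp [Dv, fderiv_fun_sub (hf.diffAt q) (hg.diffAt q)]
theorem dv_neg {f : ℝ × V3 → ℝ} (v q) : Dv v (fun q => -f q) q = -Dv v f q := by
  simp [Dv, fderiv_fun_neg]
theorem dv_mul {f g : ℝ × V3 → ℝ} (hf : Sm f) (hg : Sm g) (v q) :
    Dv v (fun q => f q * g q) q = Dv v f q * g q + f q * Dv v g q := by
  simp [Dv, fderiv_fun_mul (hf.diffAt q) (hg.diffAt q)]; ring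
theorem dv_sq {f : ℝ × V3 → ℝ} (hf : Sm f) (v q) :
    Dv v (fun q => f q ^ 2) q = 2 * f q * Dv v f q := by
  have h : (fun q => f q ^ 2) = fun q => f q * f q := by ext q; ring
  rw [h, dv_mul hf hf]; ring
theorem dv_const (c : ℝ) (v q) : Dv v (fun _ => c) q = 0 := by simp [Dv]
theorem dv_sum {ι : Type*} {s : Finset ι} {f : ι → ℝ × V3 → ℝ} (hf : ∀ i ∈ s, Sm (f i)) (v q) :
    Dv v (fun q => ∑ i ∈ s, f i q) q = ∑ i ∈ s, Dv v (f i) q := by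
  simp [Dv, fderiv_fun_sum (fun i hi => (hf i hi).diffAt q)]
theorem dv_comm {g : ℝ × V3 → ℝ} (hg : Sm g) (v w : ℝ × V3) (q) :
    Dv v (Dv w g) q = Dv w (Dv v g) q := by
  have h1 : DifferentiableAt ℝ (fderiv ℝ g) q := ((hg.fderiv_right (m := (⊤ : ℕ∞)) (by simp)).differentiable (by simp)) q
  show fderiv ℝ (fun q' => fderiv ℝ g q' w) q v = fderiv ℝ (fun q' => fderiv ℝ g q' v) q w
  rw [fderiv_clm_apply h1 (differentiableAt_const w), fderiv_clm_apply h1 (differentiableAt_const v)]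
  simp only [fderiv_fun_const, ContinuousLinearMap.add_apply, ContinuousLinearMap.comp_apply,
    ContinuousLinearMap.flip_apply, Pi.zero_apply, ContinuousLinearMap.comp_zero,
    ContinuousLinearMap.zero_apply, map_zero, zero_add]
  exact ((hg.contDiffAt).isSymmSndFDerivAt (by rw [minSmoothness_of_isRCLikeNormedField]; exact WithTop.coe_le_coe.2 le_top)).eq v w

theorem slice_hasDerivAt {g : ℝ × V3 → ℝ} (hg : Sm g) (t : ℝ) (x : V3) :
    HasDerivAt (fun s => g (s, x)) (Dv ((1:ℝ), (0:V3)) g (t, x)) t := by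
  have hL : HasDerivAt (fun s : ℝ => (s, x)) ((1:ℝ), (0:V3)) t :=
    (hasDerivAt_id t).prodMk (hasDerivAt_const t x)
  exact (hg.diffAt (t, x)).hasFDerivAt.comp_hasDerivAt t hL

theorem slice_deriv {g : ℝ × V3 → ℝ} (hg : Sm g) (t : ℝ) (x : V3) :
    deriv (fun s => g (s, x)) t = Dv ((1:ℝ), (0:V3)) g (t, x) :=
  (slice_hasDerivAt hg t x).deriv

theorem slice_spd {g : ℝ × V3 → ℝ} (hg : Sm g) (i : Fin 3) (t : ℝ) (x : V3) :
    spd i (fun y => g (t, y)) x = Dv ((0:ℝ), e3 i) g (t, x) := by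
  have hL : HasFDerivAt (fun y : V3 => (t, y)) (ContinuousLinearMap.inr ℝ ℝ V3) x :=
    (hasFDerivAt_const t x).prodMk (hasFDerivAt_id x)
  have h2 := ((hg.diffAt (t, x)).hasFDerivAt.comp x hL).fderiv
  show fderiv ℝ (g ∘ Prod.mk t) x (e3 i) = _
  rw [h2]; rfl

def Wm (A : Fin 3 → ℝ × V3 → ℝ) (Dd : Fin 3 → ℝ × V3 → ℝ) (m : Fin 3) : ℝ × V3 → ℝ :=
  fun q => Dv ((1:ℝ), (0:V3)) (Dd m) q + ∑ i, A i q * Dv ((0:ℝ), e3 i) (Dd m) q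

def E2 (A : Fin 3 → ℝ × V3 → ℝ) (B : Fin 3 → Fin 3 → ℝ × V3 → ℝ)
    (Dd : Fin 3 → ℝ × V3 → ℝ) : ℝ × V3 → ℝ := fun q =>
  (∑ k, (A k q)^2) + (∑ i, ∑ j, (B i j q)^2) + (∑ m, (Wm A Dd m q)^2)
    + (∑ i, ∑ m, (Dv ((0:ℝ), e3 i) (Dd m) q)^2)

def Gf (A : Fin 3 → ℝ × V3 → ℝ) (B : Fin 3 → Fin 3 → ℝ × V3 → ℝ)
    (Dd : Fin 3 → ℝ × V3 → ℝ) (Pf : ℝ × V3 → ℝ) (j : Fin 3) : ℝ × V3 → ℝ := fun q =>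
  -((∑ k, (A k q)^2) * A j q) - 2 * Pf q * A j q
  + 2 * ∑ i, ∑ k, A i q * B i k q * B j k q
  - 2 * ∑ i, ∑ m, A i q * Dv ((0:ℝ), e3 i) (Dd m) q * Dv ((0:ℝ), e3 j) (Dd m) q
  - (∑ i, ∑ k, (B i k q)^2) * A j q
  + 2 * ∑ m, Dv ((0:ℝ), e3 j) (Dd m) q * Wm A Dd m q
  - (∑ m, (Wm A Dd m q)^2) * A j q
  - (∑ i, ∑ m, (Dv ((0:ℝ), e3 i) (Dd m) q)^2) * A j q

set_option maxHeartbeats 4000000 in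
theorem key (A : Fin 3 → ℝ × V3 → ℝ) (B : Fin 3 → Fin 3 → ℝ × V3 → ℝ)
    (Dd : Fin 3 → ℝ × V3 → ℝ) (Pf : ℝ × V3 → ℝ) (hA : ∀ i, Sm (A i)) (hB : ∀ i j, Sm (B i j)) (hD : ∀ m, Sm (Dd m)) (hP : Sm Pf)
    (q : ℝ × V3)
    (hu : ∀ i, Dv ((1:ℝ), (0:V3)) (A i) q
      = -(∑ j, A j q * Dv ((0:ℝ), e3 j) (A i) q) - Dv ((0:ℝ), e3 i) Pf q
        + (∑ j, Dv ((0:ℝ), e3 j) (fun q => ∑ k, B i k q * B j k q) q)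
        - (∑ j, Dv ((0:ℝ), e3 j)
            (fun q => ∑ m, Dv ((0:ℝ), e3 i) (Dd m) q * Dv ((0:ℝ), e3 j) (Dd m) q) q))
    (hFq : ∀ i j, Dv ((1:ℝ), (0:V3)) (B i j) q
      = -(∑ k, A k q * Dv ((0:ℝ), e3 k) (B i j) q) + ∑ k, Dv ((0:ℝ), e3 k) (A i) q * B k j q)
    (hw : ∀ m, Dv ((1:ℝ), (0:V3)) (Wm A Dd m) q
        + (∑ i, A i q * Dv ((0:ℝ), e3 i) (Wm A Dd m) q)
        - (∑ j, Dv ((0:ℝ), e3 j) (Dv ((0:ℝ), e3 j) (Dd m)) q)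
      = (-(∑ k, (Wm A Dd k q)^2) + ∑ i, ∑ k, (Dv ((0:ℝ), e3 i) (Dd k) q)^2) * Dd m q)
    (hdiv : ∑ i, Dv ((0:ℝ), e3 i) (A i) q = 0)
    (hdW : ∑ m, Dd m q * Wm A Dd m q = 0) :
    Dv ((1:ℝ), (0:V3)) (E2 A B Dd) q = ∑ j, Dv ((0:ℝ), e3 j) (Gf A B Dd Pf j) q := by
  have hWsm : ∀ m, Sm (Wm A Dd m) := fun m =>
    ((hD m).dv _).add (Sm.sum (fun i _ => (hA i).mul ((hD m).dv _)))
  have hDTd : ∀ m, Dv ((1:ℝ), (0:V3)) (Dd m)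
      = fun q => Wm A Dd m q - ∑ k, A k q * Dv ((0:ℝ), e3 k) (Dd m) q := by
    intro m; funext q; simp [Wm]
  have hTin : ∀ (i m : Fin 3), Dv ((1:ℝ), (0:V3)) (Dv ((0:ℝ), e3 i) (Dd m))
      = fun q => Dv ((0:ℝ), e3 i)
          (fun q' => Wm A Dd m q' - ∑ k, A k q' * Dv ((0:ℝ), e3 k) (Dd m) q') q := by
    intro i m; funext q
    rw [show Dv ((1:ℝ), (0:V3)) (Dv ((0:ℝ), e3 i) (Dd m)) q
        = Dv ((0:ℝ), e3 i) (Dv ((1:ℝ), (0:V3)) (Dd m)) q from dv_comm (hD m) _ _ q, hDTd m]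
  have hsw10 : ∀ m, Dv ((0:ℝ), e3 1) (Dv ((0:ℝ), e3 0) (Dd m)) = Dv ((0:ℝ), e3 0) (Dv ((0:ℝ), e3 1) (Dd m)) :=
    fun m => funext fun q => dv_comm (hD m) _ _ q
  have hsw20 : ∀ m, Dv ((0:ℝ), e3 2) (Dv ((0:ℝ), e3 0) (Dd m)) = Dv ((0:ℝ), e3 0) (Dv ((0:ℝ), e3 2) (Dd m)) :=
    fun m => funext fun q => dv_comm (hD m) _ _ q
  have hsw21 : ∀ m, Dv ((0:ℝ), e3 2) (Dv ((0:ℝ), e3 1) (Dd m)) = Dv ((0:ℝ), e3 1) (Dv ((0:ℝ), e3 2) (Dd m)) :=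
    fun m => funext fun q => dv_comm (hD m) _ _ q
  unfold E2 Gf
  simp (disch := repeat' first
      | exact hP | apply hWsm | apply hA | apply hB | apply hD
      | apply Sm.dv | apply Sm.add | apply Sm.sub | apply Sm.neg' | apply Sm.mul
      | apply Sm.sq | apply Sm.sum | exact Sm.const _ | intro _ _) only
    [dv_add, dv_sub, dv_neg, dv_mul, dv_sq, dv_sum, dv_const] at hu hFq ⊢
  simp only [hTin]
  simp (disch := repeat' first
      | exact hP | apply hWsm | apply hA | apply hB | apply hD
      | apply Sm.dv | apply Sm.add | apply Sm.sub | apply Sm.neg' | apply Sm.mul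
      | apply Sm.sq | apply Sm.sum | exact Sm.const _ | intro _ _) only
    [dv_add, dv_sub, dv_neg, dv_mul, dv_sq, dv_sum, dv_const]
  simp only [Fin.sum_univ_three] at hu hFq hw hdiv hdW ⊢
  have hu0 := hu 0; have hu1 := hu 1; have hu2 := hu 2
  simp only [hsw10, hsw20, hsw21] at hu0 hu1 hu2 ⊢
  linear_combination (2 * A 0 q) * hu0 + (2 * A 1 q) * hu1 + (2 * A 2 q) * hu2 + (2 * B 0 0 q) * hFq 0 0 + (2 * B 0 1 q) * hFq 0 1 + (2 * B 0 2 q) * hFq 0 2 + (2 * B 1 0 q) * hFq 1 0 + (2 * B 1 1 q) * hFq 1 1 + (2 * B 1 2 q) * hFq 1 2 + (2 * B 2 0 q) * hFq 2 0 + (2 * B 2 1 q) * hFq 2 1 + (2 * B 2 2 q) * hFq 2 2 + (2 * Wm A Dd 0 q) * hw 0 + (2 * Wm A Dd 1 q) * hw 1 + (2 * Wm A Dd 2 q) * hw 2 + ((A 0 q ^ 2 + A 1 q ^ 2 + A 2 q ^ 2) + 2 * Pf q + (B 0 0 q ^ 2 + B 0 1 q ^ 2 + B 0 2 q ^ 2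 + B 1 0 q ^ 2 + B 1 1 q ^ 2 + B 1 2 q ^ 2 + B 2 0 q ^ 2 + B 2 1 q ^ 2 + B 2 2 q ^ 2) + (Wm A Dd 0 q ^ 2 + Wm A Dd 1 q ^ 2 + Wm A Dd 2 q ^ 2) + (Dv ((0:ℝ), e3 0) (Dd 0) q ^ 2 + Dv ((0:ℝ), e3 0) (Dd 1) q ^ 2 + Dv ((0:ℝ), e3 0) (Dd 2) q ^ 2 + Dv ((0:ℝ), e3 1) (Dd 0) q ^ 2 + Dv ((0:ℝ), e3 1) (Dd 1) q ^ 2 + Dv ((0:ℝ), e3 1) (Dd 2) q ^ 2 + Dv ((0:ℝ), e3 2) (Dd 0) q ^ 2 + Dv ((0:ℝ), e3 2) (Dd 1) q ^ 2 + Dv ((0:ℝ), e3 2) (Dd 2) q ^ 2)) * hdiv + (2 * (-((Wm A Dd 0 q ^ 2 + Wm A Dd 1 q ^ 2 + Wm A Dd 2 q ^ 2)) + (Dv ((0:ℝ), e3 0) (Dd 0) q ^ 2 + Dv ((0:ℝ), e3 0) (Dd 1) q ^ 2 + Dv ((0:ℝ), e3 0) (Dd 2) q ^ 2 + Dv ((0:ℝ),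 e3 1) (Dd 0) q ^ 2 + Dv ((0:ℝ), e3 1) (Dd 1) q ^ 2 + Dv ((0:ℝ), e3 1) (Dd 2) q ^ 2 + Dv ((0:ℝ), e3 2) (Dd 0) q ^ 2 + Dv ((0:ℝ), e3 2) (Dd 1) q ^ 2 + Dv ((0:ℝ), e3 2) (Dd 2) q ^ 2))) * hdW


theorem e3_eq (i : Fin 3) : e3 i = Pi.single i 1 := by
  funext j; simp [e3, Pi.single_apply]

theorem int_spd_zero (g : V3 → ℝ) (hg : ContDiff ℝ (⊤ : ℕ∞) g) (R : ℝ) (hR : 0 ≤ R)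
    (h0 : ∀ x : V3, R ≤ ‖x‖ → g x = 0) (i : Fin 3) : ∫ x : V3, spd i g x = 0 := by
  have hfd0 : ∀ x : V3, R < ‖x‖ → fderiv ℝ g x = 0 := by
    intro x hx
    have hev : g =ᶠ[nhds x] (fun _ => (0:ℝ)) := by
      filter_upwards [(isOpen_lt continuous_const continuous_norm).mem_nhds hx] with y hy
      exact h0 y hy.le
    rw [hev.fderiv_eq, fderiv_fun_const]; rfl
  set a : V3 := fun _ => -(R + 1) with ha
  set b : V3 := fun _ => R + 1 with hb
  have hRR : R ≤ R + 1 := by linarith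
  have hle : a ≤ b := by intro j; simp [ha, hb]; linarith
  set f : Fin 3 → V3 → ℝ := fun k x => if k = i then g x else 0 with hf
  set f' : Fin 3 → V3 → V3 →L[ℝ] ℝ := fun k x => if k = i then fderiv ℝ g x else 0 with hf'
  have hdvg : ∀ x : V3, (∑ k, f' k x (Pi.single k 1)) = spd i g x := by
    intro x
    rw [Finset.sum_eq_single i]
    · simp [hf', spd, e3_eq]
    · intro k _ hk; simp [hf', hk]
    · simp
  have hsm : ContDiff ℝ (⊤ : ℕ∞) (fun x => fderiv ℝ g x (Pi.single i (1:ℝ))) :=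
    (hg.fderiv_right (by simp)).clm_apply contDiff_const
  have key := MeasureTheory.integral_divergence_of_hasFDerivAt_off_countable' (n := 2)
    a b hle f f' ∅ countable_empty
    (fun k => by
      by_cases hk : k = i
      · subst hk; simpa [hf] using (hg.continuous).continuousOn
      · simp only [hf, if_neg hk]; exact continuousOn_const)
    (fun x _ k => by
      by_cases hk : k = i
      · subst hk; simpa [hf, hf'] using (hg.differentiable (by simp) x).hasFDerivAt
      · simp only [hf, hf', if_neg hk]; exact hasFDerivAt_const 0 x)
    (by
      apply (ContinuousOn.integrableOn_compact isCompact_Icc)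
      have : ContinuousOn (fun x => spd i g x) (Icc a b) := by
        have : ContDiff ℝ (⊤ : ℕ∞) (fun x => spd i g x) := by
          simp only [spd, e3_eq]; exact hsm
        exact this.continuous.continuousOn
      exact this.congr (fun x _ => (hdvg x)))
  -- boundary terms vanish
  have hbd : ∀ (k : Fin 3) (c : ℝ) (y : Fin 2 → ℝ), R + 1 ≤ |c| → f k ((Fin.insertNth (α := fun _ => ℝ) k c y)) = 0 := by
    intro k c y hc
    have hnx : R ≤ ‖(Fin.insertNth (α := fun _ => ℝ) k c y)‖ := by
      have h1 : |((Fin.insertNth (α := fun _ => ℝ) k c y)) k| ≤ ‖(Fin.insertNth (α := fun _ => ℝ) k c y)‖ := by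
        simpa [Real.norm_eq_abs] using norm_le_pi_norm ((Fin.insertNth (α := fun _ => ℝ) k c y)) k
      rw [Fin.insertNth_apply_same] at h1
      linarith
    by_cases hk : k = i
    · subst hk; simp [hf, h0 _ hnx]
    · simp [hf, hk]
  simp only [hdvg] at key
  have key2 : (∫ x in Icc a b, spd i g x) = 0 := by
    rw [key]
    apply Finset.sum_eq_zero
    intro k _
    have h1 : ∀ y : Fin 2 → ℝ, f k ((Fin.insertNth (α := fun _ => ℝ) k (b k) y)) = 0 := by
      intro y; refine hbd k _ y ?_
      show R + 1 ≤ |b k|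
      simp only [hb]
      rw [abs_of_nonneg (by linarith : (0:ℝ) ≤ R + 1)]
    have h2 : ∀ y : Fin 2 → ℝ, f k ((Fin.insertNth (α := fun _ => ℝ) k (a k) y)) = 0 := by
      intro y; refine hbd k _ y ?_
      show R + 1 ≤ |a k|
      simp only [ha]
      rw [abs_of_nonpos (by linarith : -(R+1) ≤ (0:ℝ))]
      linarith
    simp [h1, h2]
  have hout : ∀ x : V3, x ∉ Icc a b → spd i g x = 0 := by
    intro x hx
    have hex : ∃ j, ¬ (a j ≤ x j ∧ x j ≤ b j) := by
      by_contra hcon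
      push_neg at hcon
      exact hx ⟨fun j => (hcon j).1, fun j => (hcon j).2⟩
    obtain ⟨j, hj⟩ := hex
    rw [not_and_or, not_le, not_le] at hj
    have hxj : R + 1 < |x j| := by
      rcases hj with h | h
      · have : x j < -(R+1) := by simpa [ha] using h
        have := neg_le_abs (x j); linarith
      · have : R + 1 < x j := by simpa [hb] using h
        have := le_abs_self (x j); linarith
    have hbig : R < ‖x‖ := by
      have h1 : |x j| ≤ ‖x‖ := by simpa [Real.norm_eq_abs] using norm_le_pi_norm x j
      linarith
    simp [spd, hfd0 x hbig]
  rw [MeasureTheory.setIntegral_eq_integral_of_forall_compl_eq_zero hout] at key2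
  exact key2


theorem norm_le_rad (x : V3) : ‖x‖ ≤ rad x := by
  have h0 : 0 ≤ rad x := Real.sqrt_nonneg _
  rw [pi_norm_le_iff_of_nonneg h0]
  intro i
  rw [Real.norm_eq_abs, ← Real.sqrt_sq_eq_abs]
  exact Real.sqrt_le_sqrt (Finset.single_le_sum (fun j _ => sq_nonneg (x j)) (Finset.mem_univ i))

def J3 (f : ℝ → V3 → Fin 3 → ℝ) (k : Fin 3) : ℝ × V3 → ℝ := fun q => f q.1 q.2 k
def JM (f : ℝ → V3 → Fin 3 → Fin 3 → ℝ) (i j : Fin 3) : ℝ × V3 → ℝ := fun q => f q.1 q.2 i j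
def JS (f : ℝ → V3 → ℝ) : ℝ × V3 → ℝ := fun q => f q.1 q.2

section Bridge
variable {u : ℝ → V3 → Fin 3 → ℝ} {Fm : ℝ → V3 → Fin 3 → Fin 3 → ℝ} {pp : ℝ → V3 → ℝ}

theorem smJ3 (h : ContDiff ℝ (⊤ : ℕ∞) fun q : ℝ × V3 => u q.1 q.2) (k : Fin 3) : Sm (J3 u k) :=
  (ContinuousLinearMap.proj k : (V3) →L[ℝ] ℝ).contDiff.comp h

theorem smJM (h : ContDiff ℝ (⊤ : ℕ∞) fun q : ℝ × V3 => Fm q.1 q.2) (i j : Fin 3) : Sm (JM Fm i j) :=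
  (((ContinuousLinearMap.proj j : V3 →L[ℝ] ℝ).comp
    (ContinuousLinearMap.proj i : (Fin 3 → V3) →L[ℝ] V3))).contDiff.comp h

theorem bptC (h : ContDiff ℝ (⊤ : ℕ∞) fun q : ℝ × V3 => u q.1 q.2) (t : ℝ) (x : V3) (k : Fin 3) :
    ptC u t x k = Dv ((1:ℝ), (0:V3)) (J3 u k) (t, x) := slice_deriv (smJ3 h k) t x

theorem bpdC (h : ContDiff ℝ (⊤ : ℕ∞) fun q : ℝ × V3 => u q.1 q.2) (i : Fin 3) (t : ℝ) (x : V3) (k : Fin 3) :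
    pdC i u t x k = Dv ((0:ℝ), e3 i) (J3 u k) (t, x) := slice_spd (smJ3 h k) i t x

theorem bptM (h : ContDiff ℝ (⊤ : ℕ∞) fun q : ℝ × V3 => Fm q.1 q.2) (t : ℝ) (x : V3) (i j : Fin 3) :
    ptM Fm t x i j = Dv ((1:ℝ), (0:V3)) (JM Fm i j) (t, x) := slice_deriv (smJM h i j) t x

theorem bpdM (h : ContDiff ℝ (⊤ : ℕ∞) fun q : ℝ × V3 => Fm q.1 q.2) (k : Fin 3) (t : ℝ) (x : V3) (i j : Fin 3) :
    pdM k Fm t x i j = Dv ((0:ℝ), e3 k) (JM Fm i j) (t, x) := slice_spd (smJM h i j) k t x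

theorem bpd (h : ContDiff ℝ (⊤ : ℕ∞) fun q : ℝ × V3 => pp q.1 q.2) (i : Fin 3) (t : ℝ) (x : V3) :
    pd i pp t x = Dv ((0:ℝ), e3 i) (JS pp) (t, x) := slice_spd h i t x

end Bridge

end LCEaux


set_option maxHeartbeats 4000000 in
open LCEaux in
/-- Conservation of the basic energy: for a smooth solution of the
LCE system on `ℝ³ × [0,T]` with `div u = 0`, `|d| = 1`, whose fields
`u, F, D_t d, ∇d, p` decay sufficiently fast (here: are supported in a fixed ball),
the energy `E(t)` is constant on `[0,T]`. -/
theorem stmt3 (T : ℝ) (hT : 0 ≤ T) (u : VF) (F : MF) (d : VF) (p : SF)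
    (hsol : IsOrigSol3 T u F d p)
    (hdecay : ∃ R : ℝ, 0 < R ∧ ∀ t ∈ Set.Icc (0:ℝ) T, ∀ x : V3, R ≤ rad x →
      (∀ k, u t x k = 0) ∧ (∀ i j, F t x i j = 0) ∧ (∀ m, DtC u d t x m = 0)
      ∧ (∀ i m, pdC i d t x m = 0) ∧ p t x = 0) :
    ∀ t ∈ Set.Icc (0:ℝ) T, basicE u F d t = basicE u F d 0 := by
  obtain ⟨R, hRpos, hdec⟩ := hdecay
  have h0mem : (0:ℝ) ∈ Set.Icc (0:ℝ) T := ⟨le_refl 0, hT⟩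
  have hAsm : ∀ i, Sm (J3 u i) := smJ3 hsol.smooth_u
  have hBsm : ∀ i j, Sm (JM F i j) := smJM hsol.smooth_F
  have hDsm : ∀ m, Sm (J3 d m) := smJ3 hsol.smooth_d
  have hPsm : Sm (JS p) := hsol.smooth_p
  have hWsm : ∀ m, Sm (Wm (J3 u) (J3 d) m) := fun m =>
    Sm.add ((hDsm m).dv _) (Sm.sum fun i _ => Sm.mul (hAsm i) ((hDsm m).dv _))
  have hE2sm : Sm (E2 (J3 u) (JM F) (J3 d)) := by
    unfold E2
    repeat' first
      | apply hAsm | apply hBsm | apply hDsm | apply hWsm | apply Sm.dv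
      | apply Sm.sq | apply Sm.sum | apply Sm.add | intro _ _
  have hGsm : ∀ j, Sm (Gf (J3 u) (JM F) (J3 d) (JS p) j) := by
    intro j; unfold Gf
    repeat' first
      | apply hAsm | apply hBsm | apply hDsm | apply hWsm | exact hPsm | apply Sm.dv
      | exact Sm.const _ | apply Sm.sq | apply Sm.sum | apply Sm.neg' | apply Sm.sub
      | apply Sm.mul | apply Sm.add | intro _ _
  have bW : ∀ t x m, DtC u d t x m = Wm (J3 u) (J3 d) m (t, x) := by
    intro t x m
    show ptC d t x m + (∑ i, u t x i * pdC i d t x m) = _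
    rw [bptC hsol.smooth_d]
    exact congrArg _ (Finset.sum_congr rfl fun i _ => by rw [bpdC hsol.smooth_d]; rfl)
  -- support facts
  have hsupp : ∀ t ∈ Set.Icc (0:ℝ) T, ∀ x : V3, R ≤ ‖x‖ →
      (∀ k, J3 u k (t,x) = 0) ∧ (∀ i j, JM F i j (t,x) = 0)
      ∧ (∀ m, Wm (J3 u) (J3 d) m (t,x) = 0)
      ∧ (∀ i m, Dv ((0:ℝ), e3 i) (J3 d m) (t,x) = 0) ∧ JS p (t,x) = 0 := by
    intro t ht x hx
    obtain ⟨h1, h2, h3, h4, h5⟩ := hdec t ht x (le_trans hx (norm_le_rad x))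
    exact ⟨h1, h2, fun m => by rw [← bW]; exact h3 m,
      fun i m => by rw [← bpdC hsol.smooth_d]; exact h4 i m, h5⟩
  have hE2supp : ∀ t ∈ Set.Icc (0:ℝ) T, ∀ x : V3, R ≤ ‖x‖ →
      E2 (J3 u) (JM F) (J3 d) (t,x) = 0 := by
    intro t ht x hx
    obtain ⟨h1, h2, h3, h4, _⟩ := hsupp t ht x hx
    simp [E2, h1, h2, h3, h4]
  have hGsupp : ∀ (j : Fin 3), ∀ t ∈ Set.Icc (0:ℝ) T, ∀ x : V3, R ≤ ‖x‖ →
      Gf (J3 u) (JM F) (J3 d) (JS p) j (t,x) = 0 := by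
    intro j t ht x hx
    obtain ⟨h1, h2, h3, h4, h5⟩ := hsupp t ht x hx
    simp [Gf, h1, h2, h3, h4, h5]
  -- the pointwise identity
  have hkey : ∀ t ∈ Set.Ioo (0:ℝ) T, ∀ x : V3,
      Dv ((1:ℝ), (0:V3)) (E2 (J3 u) (JM F) (J3 d)) (t,x)
        = ∑ j, Dv ((0:ℝ), e3 j) (Gf (J3 u) (JM F) (J3 d) (JS p) j) (t,x) := by
    intro t ht x
    have htI : t ∈ Set.Icc (0:ℝ) T := ⟨ht.1.le, ht.2.le⟩
    refine key (J3 u) (JM F) (J3 d) (JS p) hAsm hBsm hDsm hPsm (t,x) ?_ ?_ ?_ ?_ ?_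
    · -- hu
      intro i
      have H := hsol.eq_u t htI x i
      rw [bptC hsol.smooth_u, bpd hsol.smooth_p] at H
      have eT : (∑ j, u t x j * pdC j u t x i)
          = ∑ j, J3 u j (t,x) * Dv ((0:ℝ), e3 j) (J3 u i) (t,x) :=
        Finset.sum_congr rfl fun j _ => by rw [bpdC hsol.smooth_u]; rfl
      have e1 : ∀ j : Fin 3, spd j (fun y => ∑ k, F t y i k * F t y j k) x
          = Dv ((0:ℝ), e3 j) (fun q => ∑ k, JM F i k q * JM F j k q) (t,x) := fun j =>
        slice_spd (Sm.sum fun k _ => Sm.mul (hBsm i k) (hBsm j k)) j t x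
      have e2 : ∀ j : Fin 3, spd j (fun y => ∑ k, pdC i d t y k * pdC j d t y k) x
          = Dv ((0:ℝ), e3 j) (fun q => ∑ m, Dv ((0:ℝ), e3 i) (J3 d m) q
              * Dv ((0:ℝ), e3 j) (J3 d m) q) (t,x) := by
        intro j
        have hfe : (fun y => ∑ k, pdC i d t y k * pdC j d t y k)
            = fun y => ∑ m, Dv ((0:ℝ), e3 i) (J3 d m) (t,y) * Dv ((0:ℝ), e3 j) (J3 d m) (t,y) :=
          funext fun y => Finset.sum_congr rfl fun k _ => by
            rw [bpdC hsol.smooth_d, bpdC hsol.smooth_d]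
        rw [hfe]
        exact slice_spd (Sm.sum fun m _ => Sm.mul ((hDsm m).dv _) ((hDsm m).dv _)) j t x
      rw [eT, Finset.sum_congr rfl fun j _ => e1 j, Finset.sum_congr rfl fun j _ => e2 j] at H
      linarith [H]
    · -- hF
      intro i j
      have H := hsol.eq_F t htI x i j
      rw [bptM hsol.smooth_F] at H
      have eT : (∑ k, u t x k * pdM k F t x i j)
          = ∑ k, J3 u k (t,x) * Dv ((0:ℝ), e3 k) (JM F i j) (t,x) :=
        Finset.sum_congr rfl fun k _ => by rw [bpdM hsol.smooth_F]; rfl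
      have eR : (∑ k, pdC k u t x i * F t x k j)
          = ∑ k, Dv ((0:ℝ), e3 k) (J3 u i) (t,x) * JM F k j (t,x) :=
        Finset.sum_congr rfl fun k _ => by rw [bpdC hsol.smooth_u]; rfl
      rw [eT, eR] at H
      linarith [H]
    · -- hw
      intro m
      have H := hsol.eq_d t htI x m
      have eL1 : DtC u (DtC u d) t x m
          = Dv ((1:ℝ), (0:V3)) (Wm (J3 u) (J3 d) m) (t,x)
            + ∑ i, J3 u i (t,x) * Dv ((0:ℝ), e3 i) (Wm (J3 u) (J3 d) m) (t,x) := by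
        show ptC (DtC u d) t x m + (∑ i, u t x i * pdC i (DtC u d) t x m) = _
        have h1 : ptC (DtC u d) t x m = Dv ((1:ℝ), (0:V3)) (Wm (J3 u) (J3 d) m) (t,x) := by
          show deriv (fun s => DtC u d s x m) t = _
          rw [show (fun s => DtC u d s x m) = fun s => Wm (J3 u) (J3 d) m (s, x) from
            funext fun s => bW s x m]
          exact slice_deriv (hWsm m) t x
        have h2 : ∀ i, pdC i (DtC u d) t x m
            = Dv ((0:ℝ), e3 i) (Wm (J3 u) (J3 d) m) (t,x) := by
          intro i
          show spd i (fun y => DtC u d t y m) x = _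
          rw [show (fun y => DtC u d t y m) = fun y => Wm (J3 u) (J3 d) m (t, y) from
            funext fun y => bW t y m]
          exact slice_spd (hWsm m) i t x
        rw [h1]
        exact congrArg _ (Finset.sum_congr rfl fun i _ => by rw [h2]; rfl)
      have eL2 : ∀ j : Fin 3, pdC j (pdC j d) t x m
          = Dv ((0:ℝ), e3 j) (Dv ((0:ℝ), e3 j) (J3 d m)) (t,x) := by
        intro j
        show spd j (fun y => pdC j d t y m) x = _
        rw [show (fun y => pdC j d t y m) = fun y => Dv ((0:ℝ), e3 j) (J3 d m) (t, y) from
          funext fun y => bpdC hsol.smooth_d j t y m]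
        exact slice_spd ((hDsm m).dv _) j t x
      have eR1 : (∑ k, (DtC u d t x k)^2) = ∑ k, (Wm (J3 u) (J3 d) k (t,x))^2 :=
        Finset.sum_congr rfl fun k _ => by rw [bW]
      have eR2 : (∑ i, ∑ k, (pdC i d t x k)^2)
          = ∑ i, ∑ k, (Dv ((0:ℝ), e3 i) (J3 d k) (t,x))^2 :=
        Finset.sum_congr rfl fun i _ => Finset.sum_congr rfl fun k _ => by
          rw [bpdC hsol.smooth_d]
      have hdm : d t x m = J3 d m (t, x) := rfl
      rw [eL1, Finset.sum_congr rfl fun j _ => eL2 j, eR1, eR2, hdm] at H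
      linarith [H]
    · -- div
      have H := hsol.div_u t htI x
      rw [show (∑ i, pdC i u t x i) = ∑ i, Dv ((0:ℝ), e3 i) (J3 u i) (t,x) from
        Finset.sum_congr rfl fun i _ => by rw [bpdC hsol.smooth_u]] at H
      exact H
    · -- d ⬝ W = 0
      have hS : Sm (fun q : ℝ × V3 => ∑ m, (J3 d m q)^2) := Sm.sum fun m _ => (hDsm m).sq
      have htt : Dv ((1:ℝ), (0:V3)) (fun q : ℝ × V3 => ∑ m, (J3 d m q)^2) (t,x) = 0 := by
        rw [← slice_deriv hS t x]
        have hev : (fun s => ∑ m, (J3 d m (s, x))^2) =ᶠ[nhds t] fun _ => (1:ℝ) := by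
          filter_upwards [isOpen_Ioo.mem_nhds ht] with s hs
          exact hsol.unit_d s ⟨hs.1.le, hs.2.le⟩ x
        rw [hev.deriv_eq]
        simp
      have hts : ∀ j : Fin 3,
          Dv ((0:ℝ), e3 j) (fun q : ℝ × V3 => ∑ m, (J3 d m q)^2) (t,x) = 0 := by
        intro j
        rw [← slice_spd hS j t x]
        rw [show (fun y => ∑ m, (J3 d m (t, y))^2) = fun _ : V3 => (1:ℝ) from
          funext fun y => hsol.unit_d t htI y]
        simp [spd]
      have htt' : (∑ m, 2 * J3 d m (t,x) * Dv ((1:ℝ), (0:V3)) (J3 d m) (t,x)) = 0 := by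
        calc (∑ m, 2 * J3 d m (t,x) * Dv ((1:ℝ), (0:V3)) (J3 d m) (t,x))
            = ∑ m, Dv ((1:ℝ), (0:V3)) (fun q => (J3 d m q)^2) (t,x) :=
              Finset.sum_congr rfl fun m _ => (dv_sq (hDsm m) _ _).symm
          _ = Dv ((1:ℝ), (0:V3)) (fun q => ∑ m, (J3 d m q)^2) (t,x) :=
              (dv_sum (fun m _ => (hDsm m).sq) _ _).symm
          _ = 0 := htt
      have hts' : ∀ j : Fin 3,
          (∑ m, 2 * J3 d m (t,x) * Dv ((0:ℝ), e3 j) (J3 d m) (t,x)) = 0 := by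
        intro j
        calc (∑ m, 2 * J3 d m (t,x) * Dv ((0:ℝ), e3 j) (J3 d m) (t,x))
            = ∑ m, Dv ((0:ℝ), e3 j) (fun q => (J3 d m q)^2) (t,x) :=
              Finset.sum_congr rfl fun m _ => (dv_sq (hDsm m) _ _).symm
          _ = Dv ((0:ℝ), e3 j) (fun q => ∑ m, (J3 d m q)^2) (t,x) :=
              (dv_sum (fun m _ => (hDsm m).sq) _ _).symm
          _ = 0 := hts j
      simp only [Wm, Fin.sum_univ_three] at htt' hts' ⊢
      have h0 := hts' 0; have h1 := hts' 1; have h2 := hts' 2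
      linear_combination htt' / 2 + (J3 u 0 (t,x)) * h0 / 2 + (J3 u 1 (t,x)) * h1 / 2
        + (J3 u 2 (t,x)) * h2 / 2
  -- integrability helpers
  have hslicecont : ∀ (g : ℝ × V3 → ℝ), Sm g → ∀ t : ℝ, Continuous fun x : V3 => g (t, x) :=
    fun g hg t => hg.continuous.comp (continuous_const.prodMk continuous_id)
  have hflux : ∀ t ∈ Set.Icc (0:ℝ) T,
      (∫ x : V3, ∑ j, Dv ((0:ℝ), e3 j) (Gf (J3 u) (JM F) (J3 d) (JS p) j) (t,x)) = 0 := by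
    intro t ht
    have hint : ∀ j : Fin 3, MeasureTheory.Integrable
        (fun x : V3 => Dv ((0:ℝ), e3 j) (Gf (J3 u) (JM F) (J3 d) (JS p) j) (t,x)) := by
      intro j
      apply (hslicecont _ ((hGsm j).dv _) t).integrable_of_hasCompactSupport
      apply HasCompactSupport.of_support_subset_isCompact (isCompact_closedBall (0:V3) R)
      apply Function.support_subset_iff'.2
      intro x hx
      have hxn : R < ‖x‖ := by
        simpa [Metric.mem_closedBall, dist_zero_right] using hx
      rw [← slice_spd (hGsm j) j t x]
      have hev : (fun y => Gf (J3 u) (JM F) (J3 d) (JS p) j (t, y)) =ᶠ[nhds x]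
          fun _ => (0:ℝ) := by
        filter_upwards [(isOpen_lt continuous_const continuous_norm).mem_nhds hxn] with y hy
        exact hGsupp j t ht y hy.le
      show fderiv ℝ _ x (e3 j) = 0
      rw [hev.fderiv_eq, fderiv_fun_const]
      rfl
    rw [MeasureTheory.integral_finset_sum _ (fun j _ => hint j)]
    refine Finset.sum_eq_zero fun j _ => ?_
    have hsl : ∀ x : V3, Dv ((0:ℝ), e3 j) (Gf (J3 u) (JM F) (J3 d) (JS p) j) (t,x)
        = spd j (fun y => Gf (J3 u) (JM F) (J3 d) (JS p) j (t, y)) x :=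
      fun x => (slice_spd (hGsm j) j t x).symm
    simp only [hsl]
    exact int_spd_zero _ ((hGsm j).comp (contDiff_const.prodMk contDiff_id)) R hRpos.le
      (fun y hy => hGsupp j t ht y hy) j
  -- the energy as a function of time
  set Efun : ℝ → ℝ := fun s => ∫ x : V3, E2 (J3 u) (JM F) (J3 d) (s, x) with hEdef
  have hbE : ∀ t : ℝ, basicE u F d t = (1/2) * Efun t := by
    intro t
    unfold basicE
    rw [hEdef]
    congr 1
    apply congrArg
    funext x
    have e3' : (∑ m, (DtC u d t x m)^2) = ∑ m, (Wm (J3 u) (J3 d) m (t,x))^2 :=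
      Finset.sum_congr rfl fun m _ => by rw [bW]
    have e4 : (∑ i, ∑ m, (pdC i d t x m)^2)
        = ∑ i, ∑ m, (Dv ((0:ℝ), e3 i) (J3 d m) (t,x))^2 :=
      Finset.sum_congr rfl fun i _ => Finset.sum_congr rfl fun m _ => by
        rw [bpdC hsol.smooth_d]
    rw [e3', e4]
    rfl
  -- bounds
  obtain ⟨M, hM⟩ := IsCompact.exists_bound_of_continuousOn
    ((isCompact_Icc : IsCompact (Set.Icc (0:ℝ) T)).prod (isCompact_closedBall (0:V3) R))
    ((hE2sm.dv ((1:ℝ), (0:V3))).continuous.continuousOn)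
  obtain ⟨M2, hM2⟩ := IsCompact.exists_bound_of_continuousOn
    ((isCompact_Icc : IsCompact (Set.Icc (0:ℝ) T)).prod (isCompact_closedBall (0:V3) R))
    (hE2sm.continuous.continuousOn)
  have hboundInt : ∀ C : ℝ, MeasureTheory.Integrable
      ((Metric.closedBall (0:V3) R).indicator fun _ => C) := by
    intro C
    rw [MeasureTheory.integrable_indicator_iff measurableSet_closedBall]
    exact (MeasureTheory.integrableOn_const_iff (by simp)).2
      (Or.inr (isCompact_closedBall (0:V3) R).measure_lt_top)
  have hE2int : ∀ t ∈ Set.Icc (0:ℝ) T, MeasureTheory.Integrable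
      (fun x : V3 => E2 (J3 u) (JM F) (J3 d) (t, x)) := by
    intro t ht
    apply (hslicecont _ hE2sm t).integrable_of_hasCompactSupport
    apply HasCompactSupport.of_support_subset_isCompact (isCompact_closedBall (0:V3) R)
    apply Function.support_subset_iff'.2
    intro x hx
    have hxn : R < ‖x‖ := by simpa [Metric.mem_closedBall, dist_zero_right] using hx
    exact hE2supp t ht x hxn.le
  -- zero derivative on the interior
  have hderiv0 : ∀ t ∈ Set.Ioo (0:ℝ) T, HasDerivAt Efun 0 t := by
    intro t ht
    have hε : 0 < min t (T - t) := lt_min ht.1 (sub_pos.2 ht.2)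
    have hball : Metric.ball t (min t (T - t)) ⊆ Set.Ioo (0:ℝ) T := by
      intro s hs
      rw [Metric.mem_ball, Real.dist_eq, abs_lt] at hs
      constructor
      · have := hs.1; have h2 := min_le_left t (T - t); linarith
      · have := hs.2; have h2 := min_le_right t (T - t); linarith
    have hdom := hasDerivAt_integral_of_dominated_loc_of_deriv_le
      (F := fun s (x : V3) => E2 (J3 u) (JM F) (J3 d) (s, x))
      (F' := fun s (x : V3) => Dv ((1:ℝ), (0:V3)) (E2 (J3 u) (JM F) (J3 d)) (s, x))
      (bound := (Metric.closedBall (0:V3) R).indicator fun _ => M) (Metric.ball_mem_nhds t hε)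
      (Filter.Eventually.of_forall fun s => (hslicecont _ hE2sm s).aestronglyMeasurable)
      (hE2int t ⟨ht.1.le, ht.2.le⟩)
      ((hslicecont _ (hE2sm.dv _) t).aestronglyMeasurable)
      ?_ (hboundInt M)
      (Filter.Eventually.of_forall fun x s _ => slice_hasDerivAt hE2sm s x)
    · have h0 : (∫ x : V3, Dv ((1:ℝ), (0:V3)) (E2 (J3 u) (JM F) (J3 d)) (t, x)) = 0 := by
        rw [show (fun x : V3 => Dv ((1:ℝ), (0:V3)) (E2 (J3 u) (JM F) (J3 d)) (t, x))
            = fun x : V3 => ∑ j, Dv ((0:ℝ), e3 j) (Gf (J3 u) (JM F) (J3 d) (JS p) j) (t,x) from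
          funext fun x => hkey t ht x]
        exact hflux t ⟨ht.1.le, ht.2.le⟩
      rw [hEdef]
      rw [← h0]
      exact hdom.2
    · refine Filter.Eventually.of_forall fun x => ?_
      intro s hs
      show ‖Dv ((1:ℝ), (0:V3)) (E2 (J3 u) (JM F) (J3 d)) (s, x)‖
        ≤ (Metric.closedBall (0:V3) R).indicator (fun _ => M) x
      by_cases hx : ‖x‖ ≤ R
      · have hmem : (s, x) ∈ (Set.Icc (0:ℝ) T) ×ˢ Metric.closedBall (0:V3) R :=
          ⟨⟨(hball hs).1.le, (hball hs).2.le⟩, by simpa [Metric.mem_closedBall, dist_zero_right]⟩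
        have hbx : (Metric.closedBall (0:V3) R).indicator (fun _ => M) x = M := by
          rw [Set.indicator_of_mem (by simpa [Metric.mem_closedBall, dist_zero_right] : x ∈ Metric.closedBall (0:V3) R)]
        rw [hbx]
        exact hM _ hmem
      · push_neg at hx
        have hop : IsOpen ((Set.Ioo (0:ℝ) T) ×ˢ {y : V3 | R < ‖y‖}) :=
          isOpen_Ioo.prod (isOpen_lt continuous_const continuous_norm)
        have hev : (E2 (J3 u) (JM F) (J3 d)) =ᶠ[nhds (s, x)] fun _ => (0:ℝ) := by
          filter_upwards [hop.mem_nhds ⟨hball hs, hx⟩] with q hq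
          exact hE2supp q.1 ⟨hq.1.1.le, hq.1.2.le⟩ q.2 hq.2.le
        have hz : Dv ((1:ℝ), (0:V3)) (E2 (J3 u) (JM F) (J3 d)) (s, x) = 0 := by
          show fderiv ℝ _ (s, x) ((1:ℝ), (0:V3)) = 0
          rw [hev.fderiv_eq, fderiv_fun_const]
          rfl
        rw [hz, Set.indicator_of_notMem
          (by simpa [Metric.mem_closedBall, dist_zero_right] using hx.not_ge)]
        simp
  -- continuity on [0, T]
  have hcont : ContinuousOn Efun (Set.Icc (0:ℝ) T) := by
    intro t₀ ht₀
    have : Filter.Tendsto Efun (nhdsWithin t₀ (Set.Icc (0:ℝ) T)) (nhds (Efun t₀)) := by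
      rw [hEdef]
      refine MeasureTheory.tendsto_integral_filter_of_dominated_convergence
        ((Metric.closedBall (0:V3) R).indicator fun _ => M2)
        (Filter.Eventually.of_forall fun s => (hslicecont _ hE2sm s).aestronglyMeasurable)
        ?_ (hboundInt M2) ?_
      · filter_upwards [self_mem_nhdsWithin] with s hs
        refine Filter.Eventually.of_forall fun x => ?_
        by_cases hx : ‖x‖ ≤ R
        · rw [Set.indicator_of_mem (by simpa [Metric.mem_closedBall, dist_zero_right] : x ∈ Metric.closedBall (0:V3) R)]
          exact hM2 _ ⟨hs, by simpa [Metric.mem_closedBall, dist_zero_right]⟩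
        · push_neg at hx
          rw [Set.indicator_of_notMem
            (by simpa [Metric.mem_closedBall, dist_zero_right] using hx.not_ge)]
          rw [hE2supp s hs x hx.le]
          simp
      · refine Filter.Eventually.of_forall fun x => ?_
        exact ((hE2sm.continuous.comp (continuous_id.prodMk continuous_const)).tendsto t₀).mono_left
          nhdsWithin_le_nhds
    exact this
  -- constancy
  have hdiffOn : DifferentiableOn ℝ Efun (interior (Set.Icc (0:ℝ) T)) := by
    intro s hs
    rw [interior_Icc] at hs
    exact (hderiv0 s hs).differentiableAt.differentiableWithinAt
  have hderiv' : ∀ s ∈ interior (Set.Icc (0:ℝ) T), deriv Efun s = 0 := by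
    intro s hs
    rw [interior_Icc] at hs
    exact (hderiv0 s hs).deriv
  have hmono := monotoneOn_of_deriv_nonneg (convex_Icc (0:ℝ) T) hcont hdiffOn
    (fun s hs => by rw [hderiv' s hs])
  have hanti := antitoneOn_of_deriv_nonpos (convex_Icc (0:ℝ) T) hcont hdiffOn
    (fun s hs => by rw [hderiv' s hs])
  intro t htmem
  have h1 : Efun 0 ≤ Efun t := hmono h0mem htmem htmem.1
  have h2 : Efun t ≤ Efun 0 := hanti h0mem htmem htmem.1
  rw [hbE t, hbE 0, le_antisymm h2 h1]
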